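/- arXiv:1701.05098 — 4 statements merged into one kernel-verified Lean document; each statement's English description precedes it below -/
import Mathlib

section
/- For every positive integer m and every real number x, the m-th derivative of the arctangent function at x satisfies: the complex number given by (-1)^m · (m-1)! / (2i) · ( 1/(x+i)^m - 1/(x-i)^m ) is real and equals the m-th iterated derivative of arctan at x. -/
/-!
Over `ℂ` the derivative of `arctan` splits into partial fractions,
`1 / (1 + x ^ 2) = (1 / (x - i) - 1 / (x + i)) / (2 i)`, and each fraction `1 / (x + a)` is
differentiated `k` times to `(-1) ^ k k! / (x + a) ^ (k + 1)`. The resulting expression is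
invariant under complex conjugation, hence real, and is the derivative of the real arctangent.
-/

open Complex ComplexConjugate

theorem hasDerivAt_one_div_add_pow {𝕜 : Type*} [NontriviallyNormedField 𝕜] {a z : 𝕜}
    (h : z + a ≠ 0) (n : ℕ) :
    HasDerivAt (fun w => 1 / (w + a) ^ n) (-n / (z + a) ^ (n + 1)) z := by
  simp only [one_div]
  refine ((((hasDerivAt_id z).add_const a).fun_pow n).fun_inv (pow_ne_zero n h)).congr_deriv ?_
  rcases n with _ | n
  · simp
  · simp only [id, Nat.add_sub_cancel, mul_one]
    field_simp
    ring

theorem ofReal_add_I_ne_zero (x : ℝ) : (x : ℂ) + I ≠ 0 := fun h => by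
  simpa using congrArg im h

theorem ofReal_sub_I_ne_zero (x : ℝ) : (x : ℂ) - I ≠ 0 := fun h => by
  simpa using congrArg im h

/-- The closed form of the `(k + 1)`-st derivative of `arctan`. -/
noncomputable def arctanDerivSucc (k : ℕ) (z : ℂ) : ℂ :=
  (-1) ^ (k + 1) * k.factorial / (2 * I) * (1 / (z + I) ^ (k + 1) - 1 / (z - I) ^ (k + 1))

theorem hasDerivAt_arctanDerivSucc (k : ℕ) (x : ℝ) :
    HasDerivAt (arctanDerivSucc k) (arctanDerivSucc (k + 1) x) x := by
  have h := ((hasDerivAt_one_div_add_pow (ofReal_add_I_ne_zero x) (k + 1)).sub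
    (hasDerivAt_one_div_add_pow (a := -I) (ofReal_sub_I_ne_zero x) (k + 1))).const_mul
    ((-1) ^ (k + 1) * k.factorial / (2 * I) : ℂ)
  simp only [← sub_eq_add_neg] at h
  refine h.congr_deriv ?_
  simp only [arctanDerivSucc, Nat.factorial_succ]
  push_cast
  ring

theorem conj_arctanDerivSucc_ofReal (k : ℕ) (x : ℝ) :
    conj (arctanDerivSucc k x) = arctanDerivSucc k x := by
  simp only [arctanDerivSucc, map_mul, map_div₀, map_sub, map_pow, map_add, map_one, map_neg,
    conj_I, conj_ofReal, map_natCast, map_ofNat]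
  ring

theorem arctanDerivSucc_zero_ofReal (x : ℝ) :
    arctanDerivSucc 0 x = ((1 / (1 + x ^ 2) : ℝ) : ℂ) := by
  have hfactor : (1 : ℂ) + (x : ℂ) ^ 2 = ((x : ℂ) + I) * ((x : ℂ) - I) := by
    linear_combination I_sq
  rw [arctanDerivSucc]
  push_cast
  rw [hfactor]
  field_simp [ofReal_add_I_ne_zero x, ofReal_sub_I_ne_zero x]
  ring

theorem iteratedDeriv_succ_arctan (k : ℕ) (x : ℝ) :
    iteratedDeriv (k + 1) Real.arctan x = (arctanDerivSucc k x).re := by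
  induction k generalizing x with
  | zero => rw [iteratedDeriv_one, Real.deriv_arctan, arctanDerivSucc_zero_ofReal, ofReal_re]
  | succ k ih =>
    rw [iteratedDeriv_succ, funext ih]
    exact (hasDerivAt_arctanDerivSucc k x).real_of_complex.deriv

theorem iteratedDeriv_arctan_complex_formula (m : ℕ) (hm : 0 < m) (x : ℝ) :
    (-1 : ℂ) ^ m * ((m - 1).factorial : ℂ) / (2 * I)
        * (1 / ((x : ℂ) + I) ^ m - 1 / ((x : ℂ) - I) ^ m) =
      ((iteratedDeriv m Real.arctan x : ℝ) : ℂ) := by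
  obtain ⟨k, rfl⟩ := Nat.exists_eq_add_of_lt hm
  rw [zero_add, iteratedDeriv_succ_arctan, conj_eq_iff_re.mp (conj_arctanDerivSucc_ofReal k x)]
  rfl
end

section
/- For every nonzero real number x and every positive integer m, one has (1/(2m-1)) · ( 1/(1+2i/x)^{2m-1} - 1/(1-2i/x)^{2m-1} ) = (2i/(2m-1)) · (x/2)^{2m-1} · Σ_{n=1}^{2m-1} (-1)^n · (x/2)^{2m-1-(2n-1)} / (1+(x/2)²)^{2m-1} · C(2m-1, 2n-1). -/
open Complex Finset

/-! With `z = x / 2` one has `1 ± 2i/x = (z ± i)/z` and `1 + z² = (z + i)(z - i)`, so the left side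
is `z^N ((z - i)^N - (z + i)^N) / (1 + z²)^N` up to the factor `1/N`, where `N = 2m - 1`. In the
binomial expansion of `(z - i)^N - (z + i)^N` the even powers of `i` cancel and the odd ones double,
and `i^(2n-1) = -(-1)^n i`. -/

theorem sum_range_two_mul_add_one_eq_sum_odd {M : Type*} [AddCommMonoid M] {f : ℕ → M}
    (hf : ∀ k, Even k → f k = 0) (n : ℕ) :
    ∑ k ∈ range (2 * n + 1), f k = ∑ j ∈ range n, f (2 * j + 1) := by
  induction n with
  | zero => simpa using hf 0 ⟨0, rfl⟩
  | succ n ih =>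
    rw [show 2 * (n + 1) + 1 = 2 * n + 1 + 1 + 1 by ring, sum_range_succ, sum_range_succ, ih,
      hf (2 * n + 1 + 1) ⟨n + 1, by ring⟩, sum_range_succ, add_zero]

theorem add_pow_sub_sub_pow {R : Type*} [CommRing R] (z w : R) (N : ℕ) :
    (z + w) ^ N - (z - w) ^ N =
      2 * ∑ j ∈ range N, w ^ (2 * j + 1) * z ^ (N - (2 * j + 1)) * N.choose (2 * j + 1) := by
  set g : ℕ → R := fun k => (w ^ k - (-w) ^ k) * z ^ (N - k) * N.choose k
  have hg_even : ∀ k, Even k → g k = 0 := fun k hk => by simp [g, hk.neg_pow]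
  have hg_large : ∀ k, N < k → g k = 0 := fun k hk => by simp [g, Nat.choose_eq_zero_of_lt hk]
  calc (z + w) ^ N - (z - w) ^ N = ∑ k ∈ range (N + 1), g k := by
        rw [sub_eq_add_neg z, add_comm z, add_comm z, add_pow, add_pow, ← sum_sub_distrib]
        simp only [g, sub_mul]
    _ = ∑ k ∈ range (2 * N + 1), g k :=
        sum_subset (range_subset_range.2 (by omega)) fun k hk hk' =>
          hg_large k (by simp only [mem_range] at hk hk'; omega)
    _ = ∑ j ∈ range N, g (2 * j + 1) := sum_range_two_mul_add_one_eq_sum_odd hg_even N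
    _ = _ := by
        rw [mul_sum]
        refine sum_congr rfl fun j _ => ?_
        simp only [g, (odd_two_mul_add_one j).neg_pow]
        ring

theorem zpow_natCast_sub_mul_choose {K : Type*} [DivisionRing K] (z : K) (N k : ℕ) :
    z ^ ((N : ℤ) - k) * N.choose k = z ^ (N - k) * N.choose k := by
  rcases le_or_gt k N with h | h
  · rw [← Nat.cast_sub h, zpow_natCast]
  · simp [Nat.choose_eq_zero_of_lt h]

theorem sub_I_pow_sub_add_I_pow (z : ℂ) (N : ℕ) :
    (z - I) ^ N - (z + I) ^ N =
      2 * I * ∑ n ∈ Icc 1 N, (-1) ^ n * z ^ ((N : ℤ) - (2 * n - 1 : ℕ)) * N.choose (2 * n - 1) := by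
  rw [← neg_sub, add_pow_sub_sub_pow, ← Ico_add_one_right_eq_Icc, sum_Ico_eq_sum_range,
    add_tsub_cancel_right, mul_sum, mul_sum, ← sum_neg_distrib]
  refine sum_congr rfl fun j _ => ?_
  simp only [mul_assoc, zpow_natCast_sub_mul_choose]
  rw [show 2 * (1 + j) - 1 = 2 * j + 1 by omega, pow_succ I, pow_mul, I_sq, pow_add]
  ring

theorem diff_inv_pow_odd_eq_general (x : ℝ) (hx : x ≠ 0) (m : ℕ) :
    (1 / (2 * (m : ℂ) - 1)) *
        (1 / (1 + 2 * I / (x : ℂ)) ^ (2 * m - 1) - 1 / (1 - 2 * I / (x : ℂ)) ^ (2 * m - 1)) =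
      (2 * I / (2 * (m : ℂ) - 1)) * ((x : ℂ) / 2) ^ (2 * m - 1) *
        ∑ n ∈ Finset.Icc 1 (2 * m - 1),
          (-1 : ℂ) ^ n * ((x : ℂ) / 2) ^ ((2 * (m : ℤ) - 1) - (2 * (n : ℤ) - 1))
            / (1 + ((x : ℂ) / 2) ^ 2) ^ (2 * m - 1) * ((2 * m - 1).choose (2 * n - 1) : ℂ) := by
  obtain ⟨z, hz_def⟩ : ∃ z : ℂ, z = x / 2 := ⟨_, rfl⟩
  have hx2 : (x : ℂ) = 2 * z := by rw [hz_def]; ring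
  have hz : z ≠ 0 := by simpa [hz_def] using hx
  have hz_add_I : z + I ≠ 0 := fun h => by simpa [hz_def] using congrArg im h
  have hz_sub_I : z - I ≠ 0 := fun h => by simpa [hz_def] using congrArg im h
  have hsq : 1 + z ^ 2 = (z + I) * (z - I) := by linear_combination I_sq
  have hsum : ∑ n ∈ Icc 1 (2 * m - 1), (-1 : ℂ) ^ n * z ^ ((2 * (m : ℤ) - 1) - (2 * (n : ℤ) - 1))
        / (1 + z ^ 2) ^ (2 * m - 1) * ((2 * m - 1).choose (2 * n - 1) : ℂ) =
      ((z - I) ^ (2 * m - 1) - (z + I) ^ (2 * m - 1)) / (2 * I) / (1 + z ^ 2) ^ (2 * m - 1) := by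
    rw [sub_I_pow_sub_add_I_pow, mul_div_cancel_left₀ _ (by simp), sum_div]
    refine sum_congr rfl fun n hn => ?_
    have hexp : 2 * (m : ℤ) - 1 - (2 * n - 1) = ((2 * m - 1 : ℕ) : ℤ) - (2 * n - 1 : ℕ) := by
      simp only [mem_Icc] at hn; omega
    rw [hexp]; ring
  have hplus : 1 + 2 * I / (2 * z) = (z + I) / z := by field_simp
  have hminus : 1 - 2 * I / (2 * z) = (z - I) / z := by field_simp
  rw [← hz_def, hsum, hsq, mul_pow, hx2, hplus, hminus, div_pow, div_pow, one_div_div, one_div_div]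
  field_simp

theorem diff_inv_pow_odd_eq (x : ℝ) (hx : x ≠ 0) (m : ℕ) (hm : 0 < m) :
    (1 / (2 * (m : ℂ) - 1)) *
        (1 / (1 + 2 * I / (x : ℂ)) ^ (2 * m - 1) - 1 / (1 - 2 * I / (x : ℂ)) ^ (2 * m - 1)) =
      (2 * I / (2 * (m : ℂ) - 1)) * ((x : ℂ) / 2) ^ (2 * m - 1) *
        ∑ n ∈ Finset.Icc 1 (2 * m - 1),
          (-1 : ℂ) ^ n * ((x : ℂ) / 2) ^ ((2 * (m : ℤ) - 1) - (2 * (n : ℤ) - 1))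
            / (1 + ((x : ℂ) / 2) ^ 2) ^ (2 * m - 1) * ((2 * m - 1).choose (2 * n - 1) : ℂ) :=
  diff_inv_pow_odd_eq_general x hx m
end

section
/- For every real number x, the double series Σ_{m=1}^{∞} Σ_{n=1}^{2m-1} (-1)^n / ( (2m-1) · (1+x²/4)^{2m-1} ) · (x/2)^{2(2m-n)-1} · C(2m-1, 2n-1) of real numbers is summable in m (each inner sum over n being a finite sum). -/
/-!
With `t = x / 2` and `N = 2m + 1`, the binomial theorem (only odd powers of `i` have nonzero
imaginary part) identifies the inner sum with `-tᴺ · Im((t + i)ᴺ)`. Since `|t + i| = √(1 + t²)`,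
the `m`-th term is at most `(|t| √(1 + t²))ᴺ / (1 + t²)ᴺ = (|t| / √(1 + t²))ᴺ`, a geometric
sequence of ratio less than one.
-/

open Finset Complex

lemma Complex.im_I_pow_two_mul (j : ℕ) : (I ^ (2 * j)).im = 0 := by
  rw [pow_mul, I_sq, ← ofReal_one, ← ofReal_neg, ← ofReal_pow, ofReal_im]

lemma Complex.im_I_pow_two_mul_add_one (j : ℕ) : (I ^ (2 * j + 1)).im = (-1) ^ j := by
  rw [pow_succ, pow_mul, I_sq, ← ofReal_one, ← ofReal_neg, ← ofReal_pow, im_ofReal_mul, I_im,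
    mul_one]

theorem Complex.im_ofReal_add_I_pow (t : ℝ) (N : ℕ) :
    ((t + I) ^ N).im =
      -∑ n ∈ Icc 1 N, (-1) ^ n * t ^ (N - (2 * n - 1)) * (N.choose (2 * n - 1) : ℝ) := by
  have expand : ((t + I) ^ N).im =
      ∑ k ∈ range (2 * N + 1), (I ^ k).im * t ^ (N - k) * (N.choose k : ℝ) := by
    rw [add_comm, add_pow, im_sum]
    have hsub : range (N + 1) ⊆ range (2 * N + 1) := range_subset_range.2 (by omega)
    refine (sum_subset hsub fun k _ hk => ?_).trans (sum_congr rfl fun k _ => ?_)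
    · rw [Nat.choose_eq_zero_of_lt (by simpa using hk)]; simp
    · rw [← ofReal_pow, ← ofReal_natCast, mul_assoc, ← ofReal_mul, im_mul_ofReal, mul_assoc]
  rw [expand, ← sum_neg_distrib]
  -- `n ↦ 2n - 1` hits every odd `k`; the even `k` contribute nothing.
  refine (sum_of_injOn (fun n => 2 * n - 1) ?_ ?_ ?_ ?_).symm
  · intro a ha b hb h; simp_all; omega
  · intro n hn; simp_all; omega
  · intro k hk hk'
    obtain ⟨j, rfl | rfl⟩ := Nat.even_or_odd' k
    · simp [im_I_pow_two_mul]
    · exact absurd ⟨j + 1, by simp at hk ⊢; omega, by dsimp only; omega⟩ hk'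
  · intro n hn
    obtain ⟨j, rfl⟩ : ∃ j, n = j + 1 := ⟨n - 1, by simp at hn; omega⟩
    rw [show 2 * (j + 1) - 1 = 2 * j + 1 by omega, im_I_pow_two_mul_add_one, pow_succ]
    ring

theorem sum_neg_one_pow_mul_choose_two_mul_sub_one (t : ℝ) (N : ℕ) :
    ∑ n ∈ Icc 1 N, (-1) ^ n * t ^ (2 * (N + 1 - n) - 1) * (N.choose (2 * n - 1) : ℝ) =
      -(t ^ N * ((t + I) ^ N).im) := by
  rw [im_ofReal_add_I_pow, mul_neg, neg_neg, mul_sum]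
  refine sum_congr rfl fun n hn => ?_
  rcases le_or_gt (2 * n - 1) N with h | h
  · rw [mem_Icc] at hn
    rw [show 2 * (N + 1 - n) - 1 = N + (N - (2 * n - 1)) by omega, pow_add]
    ring
  · simp [Nat.choose_eq_zero_of_lt h]

theorem abs_sum_neg_one_pow_mul_choose_div_le (t : ℝ) (N : ℕ) {c : ℝ} (hc : 1 ≤ c) :
    |∑ n ∈ Icc 1 N, (-1) ^ n / (c * (1 + t ^ 2) ^ N) * t ^ (2 * (N + 1 - n) - 1) *
        (N.choose (2 * n - 1) : ℝ)| ≤ (|t| / √(1 + t ^ 2)) ^ N := by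
  set s := √(1 + t ^ 2)
  have hs : 0 < s := by positivity
  have hs2 : s ^ 2 = 1 + t ^ 2 := Real.sq_sqrt (by positivity)
  have hnorm : ‖(t : ℂ) + I‖ = s := by
    simpa [add_comm (t ^ 2)] using norm_add_mul_I t 1
  have hnum : |t ^ N * ((t + I) ^ N).im| ≤ (|t| * s) ^ N := by
    rw [abs_mul, abs_pow, mul_pow, ← hnorm, ← norm_pow]
    exact mul_le_mul_of_nonneg_left (abs_im_le_norm _) (by positivity)
  have hden : (s ^ 2) ^ N ≤ c * (1 + t ^ 2) ^ N := by
    rw [hs2]; exact le_mul_of_one_le_left (by positivity) hc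
  have hfactor : ∑ n ∈ Icc 1 N, (-1) ^ n / (c * (1 + t ^ 2) ^ N) * t ^ (2 * (N + 1 - n) - 1) *
      (N.choose (2 * n - 1) : ℝ) = (∑ n ∈ Icc 1 N, (-1) ^ n * t ^ (2 * (N + 1 - n) - 1) *
        (N.choose (2 * n - 1) : ℝ)) / (c * (1 + t ^ 2) ^ N) := by
    rw [sum_div]; exact sum_congr rfl fun _ _ => by ring
  rw [hfactor, sum_neg_one_pow_mul_choose_two_mul_sub_one, abs_div, abs_neg,
    abs_of_pos (by positivity : 0 < c * (1 + t ^ 2) ^ N), div_le_iff₀ (by positivity)]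
  calc |t ^ N * ((t + I) ^ N).im| ≤ (|t| * s) ^ N := hnum
    _ = (|t| / s) ^ N * (s ^ 2) ^ N := by rw [← mul_pow]; congr 1; field_simp
    _ ≤ (|t| / s) ^ N * (c * (1 + t ^ 2) ^ N) := mul_le_mul_of_nonneg_left hden (by positivity)

theorem abs_div_sqrt_one_add_sq_lt_one (t : ℝ) : |t| / √(1 + t ^ 2) < 1 := by
  rw [div_lt_one (by positivity), ← Real.sqrt_sq_eq_abs]
  exact Real.sqrt_lt_sqrt (sq_nonneg t) (by linarith)

theorem summable_arctan_double_series (x : ℝ) :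
    Summable fun m : ℕ =>
      ∑ n ∈ Finset.Icc 1 (2 * (m + 1) - 1),
        (-1 : ℝ) ^ n / ((2 * ((m : ℝ) + 1) - 1) * (1 + x ^ 2 / 4) ^ (2 * (m + 1) - 1))
          * (x / 2) ^ (2 * (2 * (m + 1) - n) - 1) * ((2 * (m + 1) - 1).choose (2 * n - 1) : ℝ) := by
  have hρ := abs_div_sqrt_one_add_sq_lt_one (x / 2)
  refine Summable.of_norm_bounded (summable_geometric_of_lt_one (by positivity) hρ) fun m => ?_
  have hc : (1 : ℝ) ≤ 2 * ((m : ℝ) + 1) - 1 := by linarith [m.cast_nonneg (α := ℝ)]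
  calc _ ≤ (|x / 2| / √(1 + (x / 2) ^ 2)) ^ (2 * (m + 1) - 1) := by
        rw [Real.norm_eq_abs]
        convert abs_sum_neg_one_pow_mul_choose_div_le (x / 2) (2 * (m + 1) - 1) hc using 6
        all_goals first | omega | ring
    _ ≤ (|x / 2| / √(1 + (x / 2) ^ 2)) ^ m := pow_le_pow_of_le_one (by positivity) hρ.le (by omega)
end

section
/- For every real number x, arctan(x) = -2 · Σ_{m=1}^{∞} Σ_{n=1}^{2m-1} (-1)^n / ( (2m-1) · (1+x²/4)^{2m-1} ) · (x/2)^{2(2m-n)-1} · C(2m-1, 2n-1), where the inner sum over n is a finite sum and the outer series over m converges. -/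
/-!
Put `t = x / 2` and `z = t (t + i) / (1 + t²)`, i.e. `z = t / (t - i)`. By the binomial theorem
only the odd powers of `i` contribute to `Im ((t (i + t)) ^ N)`, and this makes the inner sum of
index `m` equal to `-Im (z ^ (2m+1)) / (2m+1)`. Since `‖z‖ < 1` and `(1 + z) / (1 - z) = 1 + i x`,
the series `∑ z ^ (2m+1) / (2m+1) = ½ log ((1 + z) / (1 - z))` has imaginary part
`½ arg (1 + i x) = ½ arctan x`.
-/

open Finset Complex

namespace Complex

lemma I_pow_two_mul_im (j : ℕ) : (I ^ (2 * j)).im = 0 := by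
  rw [pow_mul, I_sq, ← ofReal_one, ← ofReal_neg, ← ofReal_pow, ofReal_im]

lemma I_pow_two_mul_add_one_im (j : ℕ) : (I ^ (2 * j + 1)).im = (-1) ^ j := by
  rw [pow_succ, pow_mul, I_sq, ← ofReal_one, ← ofReal_neg, ← ofReal_pow, mul_I_im, ofReal_re]

lemma ofReal_mul_I_add_ofReal_pow_im (t : ℝ) (N : ℕ) :
    ((t * (I + t)) ^ N).im = ∑ k ∈ range (N + 1), N.choose k * t ^ (2 * N - k) * (I ^ k).im := by
  rw [mul_pow, add_pow, mul_sum, im_sum]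
  refine sum_congr rfl fun k hk => ?_
  rw [show 2 * N - k = N + (N - k) by grind, pow_add,
    show (t : ℂ) ^ N * (I ^ k * t ^ (N - k) * N.choose k) =
      ((N.choose k * (t ^ N * t ^ (N - k)) : ℝ) : ℂ) * I ^ k by push_cast; ring,
    im_ofReal_mul]

theorem sum_odd_binomial_eq_neg_im (t : ℝ) (N : ℕ) :
    ∑ n ∈ Icc 1 N, (-1) ^ n * (N.choose (2 * n - 1) : ℝ) * t ^ (2 * (N + 1 - n) - 1) =
      -((t * (I + t)) ^ N).im := by
  have hterm : ∀ n ∈ Icc 1 N,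
      (-1) ^ n * (N.choose (2 * n - 1) : ℝ) * t ^ (2 * (N + 1 - n) - 1) =
        -(N.choose (2 * n - 1) * t ^ (2 * N - (2 * n - 1)) * (I ^ (2 * n - 1)).im) := by
    intro n hn
    obtain ⟨j, rfl⟩ : ∃ j, n = j + 1 := ⟨n - 1, by grind⟩
    rw [show 2 * (j + 1) - 1 = 2 * j + 1 by omega, I_pow_two_mul_add_one_im,
      show 2 * (N + 1 - (j + 1)) - 1 = 2 * N - (2 * j + 1) by omega]
    ring
  rw [ofReal_mul_I_add_ofReal_pow_im, ← sum_neg_distrib]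
  refine sum_bij_ne_zero (fun n _ _ => 2 * n - 1) ?_ ?_ ?_ ?_
  · intro n hn hne
    rw [hterm n hn] at hne
    have : 2 * n - 1 ≤ N := by
      by_contra! h
      simp [Nat.choose_eq_zero_of_lt h] at hne
    simp only [mem_range]
    omega
  · intro a ha _ b hb _ h
    simp only [mem_Icc] at ha hb
    omega
  · intro k hk hne
    obtain ⟨j, rfl⟩ : Odd k := by
      by_contra hodd
      obtain ⟨j, rfl⟩ := Nat.not_odd_iff_even.mp hodd
      simp [← two_mul, I_pow_two_mul_im] at hne
    have hj : j + 1 ∈ Icc 1 N := by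
      simp only [mem_Icc, mem_range] at hk ⊢
      omega
    refine ⟨j + 1, hj, ?_, by omega⟩
    rwa [hterm _ hj, show 2 * (j + 1) - 1 = 2 * j + 1 by omega]
  · exact fun n hn _ => hterm n hn

theorem sum_odd_binomial_div_eq_neg_im (t : ℝ) (N : ℕ) :
    ∑ n ∈ Icc 1 N, (-1 : ℝ) ^ n / (N * (1 + t ^ 2) ^ N) * t ^ (2 * (N + 1 - n) - 1) *
        (N.choose (2 * n - 1) : ℝ) =
      -((t * (I + t) / ((1 + t ^ 2 : ℝ) : ℂ)) ^ N / N).im := by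
  rw [div_pow, ← ofReal_pow, div_natCast_im, div_ofReal_im, ← neg_div, ← neg_div,
    ← sum_odd_binomial_eq_neg_im, sum_div, sum_div]
  refine sum_congr rfl fun n _ => ?_
  ring

theorem hasSum_log_one_add_div_one_sub {z : ℂ} (hz : ‖z‖ < 1) :
    HasSum (fun n : ℕ ↦ z ^ (2 * n + 1) / ↑(2 * n + 1)) (log ((1 + z) / (1 - z)) / 2) := by
  have h := (hasSum_arctan (z := -(z * I)) (by simpa using hz)).mul_left I
  have hw : -(z * I) * I = z := by linear_combination (-z) * I_sq
  rw [arctan, hw, ← mul_assoc, show I * (-I / 2) = 1 / 2 by linear_combination (-1 / 2) * I_sq,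
    one_div_mul_eq_div] at h
  refine h.congr_fun fun n => ?_
  have hsign : (-1 : ℂ) ^ n * (-1) ^ n = 1 := by rw [← mul_pow, neg_one_mul, neg_neg, one_pow]
  rw [(odd_two_mul_add_one n).neg_pow, mul_pow, pow_succ I, pow_mul I, I_sq, ← mul_div_assoc]
  congr 1
  linear_combination z ^ (2 * n + 1) * I_sq + I ^ 2 * z ^ (2 * n + 1) * hsign

theorem arg_one_add_ofReal_mul_I (x : ℝ) : arg (1 + x * I) = Real.arctan x := by
  rw [arg_of_re_nonneg (by simp), Real.arctan_eq_arcsin, norm_def, normSq_apply]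
  simp [add_comm, sq]

lemma norm_ofReal_mul_I_add_ofReal_div_lt_one (t : ℝ) :
    ‖(t * (I + t) / ((1 + t ^ 2 : ℝ) : ℂ))‖ < 1 := by
  have hpos : 0 < 1 + t ^ 2 := by positivity
  have hsq : normSq (t * (I + t) / ((1 + t ^ 2 : ℝ) : ℂ)) = t ^ 2 / (1 + t ^ 2) := by
    rw [map_div₀, map_mul, normSq_ofReal, normSq_ofReal, normSq_apply]
    simp only [add_re, add_im, I_re, I_im, ofReal_re, ofReal_im]
    field_simp
    ring
  rw [← sq_lt_one_iff₀ (norm_nonneg _), Complex.sq_norm, hsq, div_lt_one hpos]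
  linarith

lemma one_add_div_one_sub_ofReal_mul_I_add_ofReal_div (t : ℝ) :
    (1 + t * (I + t) / ((1 + t ^ 2 : ℝ) : ℂ)) / (1 - t * (I + t) / ((1 + t ^ 2 : ℝ) : ℂ)) =
      1 + (2 * t : ℝ) * I := by
  have hne : 1 - t * (I + t) / ((1 + t ^ 2 : ℝ) : ℂ) ≠ 0 := by
    refine sub_ne_zero.mpr fun h => ?_
    have := norm_ofReal_mul_I_add_ofReal_div_lt_one t
    rw [← h, norm_one] at this
    exact this.false
  have hpos : ((1 + t ^ 2 : ℝ) : ℂ) ≠ 0 := ofReal_ne_zero.mpr (by positivity)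
  rw [div_eq_iff hne]
  field_simp
  push_cast
  linear_combination (2 * t ^ 2) * I_sq

end Complex

theorem arctan_eq_neg_two_tsum (x : ℝ) :
    (Summable fun m : ℕ =>
      ∑ n ∈ Finset.Icc 1 (2 * (m + 1) - 1),
        (-1 : ℝ) ^ n / ((2 * ((m : ℝ) + 1) - 1) * (1 + x ^ 2 / 4) ^ (2 * (m + 1) - 1))
          * (x / 2) ^ (2 * (2 * (m + 1) - n) - 1)
          * ((2 * (m + 1) - 1).choose (2 * n - 1) : ℝ)) ∧
    Real.arctan x =
      -2 * ∑' m : ℕ,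
        ∑ n ∈ Finset.Icc 1 (2 * (m + 1) - 1),
          (-1 : ℝ) ^ n / ((2 * ((m : ℝ) + 1) - 1) * (1 + x ^ 2 / 4) ^ (2 * (m + 1) - 1))
            * (x / 2) ^ (2 * (2 * (m + 1) - n) - 1)
            * ((2 * (m + 1) - 1).choose (2 * n - 1) : ℝ) := by
  set z : ℂ := (x / 2 : ℝ) * (I + (x / 2 : ℝ)) / ((1 + (x / 2) ^ 2 : ℝ) : ℂ)
  have hseries :
      HasSum (fun m : ℕ ↦ -(z ^ (2 * m + 1) / ↑(2 * m + 1)).im) (-(Real.arctan x / 2)) := by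
    have h := (hasSum_im (hasSum_log_one_add_div_one_sub
      (norm_ofReal_mul_I_add_ofReal_div_lt_one (x / 2)))).neg
    rwa [one_add_div_one_sub_ofReal_mul_I_add_ofReal_div, div_ofNat_im, log_im,
      mul_div_cancel₀ x two_ne_zero, arg_one_add_ofReal_mul_I] at h
  refine (fun h : HasSum _ (-(Real.arctan x / 2)) ↦ ⟨h.summable, by rw [h.tsum_eq]; ring⟩)
    (hseries.congr_fun fun m ↦ ?_)
  rw [← sum_odd_binomial_div_eq_neg_im, show 2 * (m + 1) = 2 * m + 1 + 1 by ring,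
    Nat.add_sub_cancel, show 1 + x ^ 2 / 4 = 1 + (x / 2) ^ 2 by ring,
    show 2 * ((m : ℝ) + 1) - 1 = ((2 * m + 1 : ℕ) : ℝ) by push_cast; ring]
end
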